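/- Under the conditions of the previous item (u* minimizes F on the L² sphere of radius √m with negative minimum value I_m < 0, and the Pohozaev identity ((N−2)/2)‖∇u*‖₂² + N((μ*/2)‖u*‖₂² − ∫G(u*)) = 0 holds), the Lagrange multiplier is positive: μ* > 0. Indeed (μ*N/2)m = −N F(u*) + ‖∇u*‖₂² ≥ −N I_m > 0. -/

import Mathlib

open MeasureTheory Real Filter RealInnerProductSpace

noncomputable section

abbrev Euc (N : ℕ) := EuclideanSpace ℝ (Fin N)

def gradSq {N : ℕ} (u : Euc N → ℝ) : ℝ := ∫ x, ‖gradient u x‖ ^ 2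

def l2Sq {N : ℕ} (u : Euc N → ℝ) : ℝ := ∫ x, (u x) ^ 2

def intG {N : ℕ} (G : ℝ → ℝ) (u : Euc N → ℝ) : ℝ := ∫ x, G (u x)

def Ifun {N : ℕ} (G : ℝ → ℝ) (m lam : ℝ) (u : Euc N → ℝ) : ℝ :=
  (1 / 2) * gradSq u - intG G u + (Real.exp lam / 2) * (l2Sq u - m)

def Jfun {N : ℕ} (G : ℝ → ℝ) (m θ lam : ℝ) (u : Euc N → ℝ) : ℝ :=
  (1 / 2) * Real.exp (((N : ℝ) - 2) * θ) * gradSq u - Real.exp ((N : ℝ) * θ) * intG G u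
    + (Real.exp lam / 2) * (Real.exp ((N : ℝ) * θ) * l2Sq u - m)

def Pfun {N : ℕ} (G : ℝ → ℝ) (lam : ℝ) (u : Euc N → ℝ) : ℝ :=
  (((N : ℝ) - 2) / 2) * gradSq u + (N : ℝ) * ((Real.exp lam / 2) * l2Sq u - intG G u)

def Ihat {N : ℕ} (G : ℝ → ℝ) (lam : ℝ) (u : Euc N → ℝ) : ℝ :=
  (1 / 2) * gradSq u + (Real.exp lam / 2) * l2Sq u - intG G u

def Ffun {N : ℕ} (G : ℝ → ℝ) (u : Euc N → ℝ) : ℝ :=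
  (1 / 2) * gradSq u - intG G u

def duI {N : ℕ} (g : ℝ → ℝ) (lam : ℝ) (u v : Euc N → ℝ) : ℝ :=
  (∫ x, ⟪gradient u x, gradient v x⟫) - (∫ x, g (u x) * v x)
    + Real.exp lam * ∫ x, u x * v x

def h1NormSq {N : ℕ} (u : Euc N → ℝ) : ℝ := gradSq u + l2Sq u

lemma gradSq_nonneg {N : ℕ} (u : Euc N → ℝ) : 0 ≤ gradSq u :=
  integral_nonneg fun _ => sq_nonneg _

lemma mul_l2Sq_eq_of_pohozaev {N : ℕ} (G : ℝ → ℝ) (μ : ℝ) (u : Euc N → ℝ)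
    (hpoho : (((N : ℝ) - 2) / 2) * gradSq u
        + (N : ℝ) * ((μ / 2) * l2Sq u - intG G u) = 0) :
    (μ * (N : ℝ) / 2) * l2Sq u = -(N : ℝ) * Ffun G u + gradSq u := by
  unfold Ffun
  linear_combination hpoho

theorem stmt_18_general {N : ℕ} (hN : 2 ≤ N) (G : ℝ → ℝ) (m μ Im : ℝ) (hm : 0 < m)
    (hIm : Im < 0) (u : Euc N → ℝ)
    (hFu : Ffun G u = Im) (hsphere : l2Sq u = m)
    (hpoho : (((N : ℝ) - 2) / 2) * gradSq u
        + (N : ℝ) * ((μ / 2) * l2Sq u - intG G u) = 0) :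
    (μ * (N : ℝ) / 2) * m = -(N : ℝ) * Ffun G u + gradSq u ∧ 0 < μ := by
  have hidentity := mul_l2Sq_eq_of_pohozaev G μ u hpoho
  rw [hsphere] at hidentity
  refine ⟨hidentity, ?_⟩
  have hNpos : (0 : ℝ) < N := by exact_mod_cast zero_lt_two.trans_le hN
  have hlhs_pos : 0 < (μ * (N : ℝ) / 2) * m := by
    rw [hidentity, hFu]
    nlinarith [gradSq_nonneg u]
  have hμN : 0 < μ * N := by nlinarith
  exact pos_of_mul_pos_left hμN hNpos.le

theorem stmt_18 {N : ℕ} (hN : 2 ≤ N) (G : ℝ → ℝ) (m μ Im : ℝ) (hm : 0 < m)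
    (hIm : Im < 0) (u : Euc N → ℝ)
    (hFu : Ffun G u = Im) (hsphere : l2Sq u = m)
    (hinf : ∀ v : Euc N → ℝ, l2Sq v = m → Im ≤ Ffun G v)
    (hpoho : (((N : ℝ) - 2) / 2) * gradSq u
        + (N : ℝ) * ((μ / 2) * l2Sq u - intG G u) = 0) :
    (μ * (N : ℝ) / 2) * m = -(N : ℝ) * Ffun G u + gradSq u ∧ 0 < μ :=
  stmt_18_general hN G m μ Im hm hIm u hFu hsphere hpoho
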